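/- Let h > 0 be real and θ ∈ ℝ. Over ℂ, let A be the 3×3 matrix (1/h²)·[[2, −1, 0], [−1, 2, −1], [0, −1, 2]], let Φ = diag(e^{−iθ}, 1, e^{iθ}), let W = (1/3)·I₃, and let V be the 3×1 column vector of ones. Then A is invertible with A⁻¹ = (h²/4)·[[3, 2, 1], [2, 4, 2], [1, 2, 3]], and the 1×1 matrix Vᵀ W Φ* A⁻¹ Φ V (where Φ* is the conjugate transpose of Φ) has its unique entry equal to (h²/12)(10 + 8cos θ + 2cos 2θ). -/

import Mathlib

open Matrix Complex

noncomputable def A17 (h : ℝ) : Matrix (Fin 3) (Fin 3) ℂ :=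
  (1 / (h ^ 2 : ℂ)) • !![2, -1, 0; -1, 2, -1; 0, -1, 2]

noncomputable def Phi17 (θ : ℝ) : Matrix (Fin 3) (Fin 3) ℂ :=
  diagonal ![exp (-(I * θ)), 1, exp (I * θ)]

noncomputable def W17 : Matrix (Fin 3) (Fin 3) ℂ := (1 / 3 : ℂ) • 1

def V17 : Matrix (Fin 3) (Fin 1) ℂ := fun _ _ => 1

/-!
The tridiagonal matrix `[2, -1, 0; -1, 2, -1; 0, -1, 2]` times its adjugate
`[3, 2, 1; 2, 4, 2; 1, 2, 3]` is `4 • 1`, which gives `A⁻¹`. With `V` all ones, `W = c • 1` and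
`Φ = diagonal d`, the product `Vᵀ W Φ* M Φ V` is the Hermitian form `c ∑ᵢⱼ conj(dᵢ) Mᵢⱼ dⱼ`.
For `d = (z⁻¹, 1, z)` with `z = e^{iθ}` on the unit circle, `Mᵢⱼ` is weighted by `z^{j-i}`, so the
form collects into `10 + 4 (z + z⁻¹) + (z² + z⁻²) = 10 + 8 cos θ + 2 cos 2θ`.
-/

lemma laplacian3_mul_adjugate {R : Type*} [CommRing R] :
    (!![2, -1, 0; -1, 2, -1; 0, -1, 2] : Matrix (Fin 3) (Fin 3) R) *
      !![3, 2, 1; 2, 4, 2; 1, 2, 3] = (4 : R) • 1 := by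
  ext i j
  fin_cases i <;> fin_cases j <;> simp [Matrix.mul_apply, Fin.sum_univ_succ] <;> norm_num

lemma A17_mul_eq_one {h : ℝ} (hh : h ≠ 0) :
    A17 h * (((h ^ 2 : ℂ) / 4) • !![3, 2, 1; 2, 4, 2; 1, 2, 3]) = 1 := by
  have hscalar : 1 / (h : ℂ) ^ 2 * (h ^ 2 / 4) * 4 = 1 := by
    field_simp [ofReal_ne_zero.mpr hh]
  rw [A17, smul_mul_smul_comm, laplacian3_mul_adjugate, smul_smul, hscalar, one_smul]

lemma transpose_mul_mul_apply_of_forall_eq_one {R : Type*} [CommSemiring R] {n m : Type*}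
    [Fintype n] (V : Matrix n m R) (hV : ∀ i j, V i j = 1) (M : Matrix n n R) (a b : m) :
    (Vᵀ * M * V) a b = ∑ i, ∑ j, M i j := by
  simp only [Matrix.mul_apply, transpose_apply, hV, one_mul, mul_one]
  exact Finset.sum_comm

lemma transpose_mul_smul_one_mul_conjTranspose_diagonal_mul_mul_diagonal_mul_apply
    {R : Type*} [CommSemiring R] [StarRing R] {n m : Type*} [Fintype n] [DecidableEq n]
    (V : Matrix n m R) (hV : ∀ i j, V i j = 1) (c : R) (d : n → R) (M : Matrix n n R) (a b : m) :
    (Vᵀ * (c • (1 : Matrix n n R)) * (diagonal d)ᴴ * M * diagonal d * V) a b =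
      c * ∑ i, ∑ j, star (d i) * M i j * d j := by
  have hassoc : Vᵀ * (c • (1 : Matrix n n R)) * (diagonal d)ᴴ * M * diagonal d * V =
      Vᵀ * (c • (diagonal (star d) * M * diagonal d)) * V := by
    simp only [Matrix.mul_assoc, diagonal_conjTranspose, smul_mul, one_mul]
  rw [hassoc, transpose_mul_mul_apply_of_forall_eq_one V hV, Finset.mul_sum]
  simp only [Matrix.smul_apply, mul_diagonal, diagonal_mul, smul_eq_mul, Finset.mul_sum]
  rfl

lemma star_cexp_I_mul (θ : ℝ) : star (cexp (I * θ)) = (cexp (I * θ))⁻¹ := by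
  rw [← Complex.exp_neg, star_def, ← exp_conj]
  simp

lemma two_mul_cos_nat_mul (θ : ℝ) (n : ℕ) :
    2 * (Real.cos (n * θ) : ℂ) = cexp (I * θ) ^ n + (cexp (I * θ) ^ n)⁻¹ := by
  rw [← exp_nat_mul, ← Complex.exp_neg, ofReal_cos, cos]
  push_cast
  ring_nf

lemma sum_star_mul_adjugate_mul_eq {z : ℂ} (hz : z ≠ 0) (hstar : star z = z⁻¹) :
    ∑ i, ∑ j, star (![z⁻¹, 1, z] i) *
        (!![3, 2, 1; 2, 4, 2; 1, 2, 3] : Matrix (Fin 3) (Fin 3) ℂ) i j * ![z⁻¹, 1, z] j =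
      10 + 4 * (z + z⁻¹) + (z ^ 2 + (z ^ 2)⁻¹) := by
  simp only [Fin.sum_univ_three, of_apply, cons_val', cons_val_zero, cons_val_one, cons_val_two,
    empty_val', cons_val_fin_one, head_cons, tail_cons, head_fin_const, star_inv₀, star_one, hstar,
    inv_inv]
  linear_combination 6 * mul_inv_cancel₀ hz

theorem stmt_17 (h θ : ℝ) (hh : 0 < h) :
    IsUnit (A17 h) ∧
    (A17 h)⁻¹ = ((h ^ 2 : ℂ) / 4) • !![3, 2, 1; 2, 4, 2; 1, 2, 3] ∧
    (V17ᵀ * W17 * (Phi17 θ)ᴴ * (A17 h)⁻¹ * Phi17 θ * V17) 0 0 =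
      ((h ^ 2 : ℂ) / 12) * (10 + 8 * (Real.cos θ : ℂ) + 2 * (Real.cos (2 * θ) : ℂ)) := by
  have hmul := A17_mul_eq_one hh.ne'
  have hinv := inv_eq_right_inv hmul
  refine ⟨IsUnit.of_mul_eq_one _ hmul, hinv, ?_⟩
  set z := cexp (I * θ)
  have hPhi : Phi17 θ = diagonal ![z⁻¹, 1, z] := by rw [Phi17, Complex.exp_neg]
  have hcos : 2 * (Real.cos θ : ℂ) = z + z⁻¹ := by simpa using two_mul_cos_nat_mul θ 1
  have hcos2 : 2 * (Real.cos (2 * θ) : ℂ) = z ^ 2 + (z ^ 2)⁻¹ := by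
    simpa using two_mul_cos_nat_mul θ 2
  rw [hinv, W17, hPhi, Matrix.mul_smul, Matrix.smul_mul, Matrix.smul_mul, Matrix.smul_apply,
    transpose_mul_smul_one_mul_conjTranspose_diagonal_mul_mul_diagonal_mul_apply V17
      (fun _ _ => rfl), sum_star_mul_adjugate_mul_eq (exp_ne_zero _) (star_cexp_I_mul θ),
    smul_eq_mul]
  linear_combination ((h : ℂ) ^ 2 / 12) * (-4 * hcos - hcos2)
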